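/- Let r be a positive integer and let z (a function assigning a real z_α to each multi-index α ∈ ℕ^{[m]×[n]} with |α| ≤ 2r) satisfy z_0 = 1 and the localizing equalities M_{r−1}(r_i z) = 0, M_{r−1}(c_j z) = 0, M_{r−1}(r_{i₁} π_{i₂j} z) = 0, and M_{r−1}(c_{j₁} π_{ij₂} z) = 0 for all i,i₁,i₂ ∈ [m] and j,j₁,j₂ ∈ [n]. For each I ⊆ [m]×[n] with |I| ≤ 2r, let M̄_{r−d_I}(e_I z) denote the principal submatrix of M_{r−d_I}(e_I z) obtained by keeping only the rows and columns indexed by multi-indices of length exactly r−d_I. Then for every such I: M_{r−d_I}(e_I z) is positive semidefinite if and only if M̄_{r−d_I}(e_I z) is positive semidefinite. -/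

import Mathlib

/-!
Let `S = ∑ π_{ij}` and let `L` be the Riesz functional of `z`. Since `∑ᵢ rᵢ = S - 1`, the
localizing equalities for `rᵢ` (monomials of degree `≤ 2r - 2`) and for `rᵢ π_{i₂j}` (degree
`2r - 1`) give `L((S - 1) g) = 0`, i.e. `L(S g) = L(g)`, for every `g` of degree `< 2r`.
For `p = ∑_{k ≤ t} p_k` of degree `≤ t = r - d_I`, its homogenization `q = ∑_k S^{t-k} p_k`
therefore satisfies `L(f q) = L(f p)` whenever `deg f + t ≤ 2r`. Taking `f = e_I q` and then
`f = e_I p` (allowed as `|I| + 2t ≤ 2r`) gives `L(e_I q²) = L(e_I p²)`, and `q` is homogeneous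
of degree `t`.
-/

open MvPolynomial

/-- The Riesz functional associated to a moment sequence `z`. -/
noncomputable def riesz {σ : Type*} (z : (σ →₀ ℕ) → ℝ) (p : MvPolynomial σ ℝ) : ℝ :=
  ∑ α ∈ p.support, MvPolynomial.coeff α p * z α

/-- The total degree (length) of a multi-index. -/
def mdeg {σ : Type*} (α : σ →₀ ℕ) : ℕ := α.sum fun _ e => e

/-- Positive semidefiniteness of the truncated localizing matrix `M_t(g z)`:
the associated quadratic form is nonnegative on coefficient vectors of
polynomials of degree at most `t`. -/
def locPSD {σ : Type*} (z : (σ →₀ ℕ) → ℝ) (g : MvPolynomial σ ℝ) (t : ℕ) : Prop :=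
  ∀ p : MvPolynomial σ ℝ, p.totalDegree ≤ t → 0 ≤ riesz z (g * p ^ 2)

/-- Vanishing of the truncated localizing matrix `M_t(g z)`: all entries are zero. -/
def locZero {σ : Type*} (z : (σ →₀ ℕ) → ℝ) (g : MvPolynomial σ ℝ) (t : ℕ) : Prop :=
  ∀ α β : σ →₀ ℕ, mdeg α ≤ t → mdeg β ≤ t →
    riesz z (g * monomial α 1 * monomial β 1) = 0

/-- The row-marginal polynomial `r_i(π) = ∑_j π_{ij} - μ_i`. -/
noncomputable def rowPoly (a b : ℕ) (μ : Fin a → ℝ) (i : Fin a) :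
    MvPolynomial (Fin a × Fin b) ℝ :=
  (∑ j, X (i, j)) - C (μ i)

/-- The column-marginal polynomial `c_j(π) = ∑_i π_{ij} - ν_j`. -/
noncomputable def colPoly (a b : ℕ) (ν : Fin b → ℝ) (j : Fin b) :
    MvPolynomial (Fin a × Fin b) ℝ :=
  (∑ i, X (i, j)) - C (ν j)

/-- The monomial `e_I = ∏_{(i,j) ∈ I} π_{ij}`. -/
noncomputable def eI {a b : ℕ} (I : Finset (Fin a × Fin b)) : MvPolynomial (Fin a × Fin b) ℝ :=
  ∏ q ∈ I, X q

/-- A probability vector: nonnegative entries summing to 1. -/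
def IsProbVec {a : ℕ} (μ : Fin a → ℝ) : Prop := (∀ i, 0 ≤ μ i) ∧ ∑ i, μ i = 1

/-- Feasibility for the level-`r` Schmüdgen moment relaxation (S-DGW-r). -/
def SFeas (a b r : ℕ) (μ : Fin a → ℝ) (ν : Fin b → ℝ)
    (z : ((Fin a × Fin b) →₀ ℕ) → ℝ) : Prop :=
  z 0 = 1 ∧
  (∀ I : Finset (Fin a × Fin b), I.card ≤ 2 * r → locPSD z (eI I) (r - (I.card + 1) / 2)) ∧
  (∀ i, locZero z (rowPoly a b μ i) (r - 1)) ∧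
  (∀ j, locZero z (colPoly a b ν j) (r - 1)) ∧
  (∀ i₁ i₂ : Fin a, ∀ j : Fin b, locZero z (rowPoly a b μ i₁ * X (i₂, j)) (r - 1)) ∧
  (∀ j₁ j₂ : Fin b, ∀ i : Fin a, locZero z (colPoly a b ν j₁ * X (i, j₂)) (r - 1))

/-- The objective of the Schmüdgen moment relaxation. -/
noncomputable def objS (a b : ℕ) (L : Fin a → Fin b → Fin a → Fin b → ℝ)
    (z : ((Fin a × Fin b) →₀ ℕ) → ℝ) : ℝ :=
  ∑ i, ∑ j, ∑ k, ∑ l, L i j k l * z (Finsupp.single (i, j) 1 + Finsupp.single (k, l) 1)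

/-- The optimal value of the level-`r` Schmüdgen moment relaxation. -/
noncomputable def valS (a b r : ℕ) (μ : Fin a → ℝ) (ν : Fin b → ℝ)
    (L : Fin a → Fin b → Fin a → Fin b → ℝ) : ℝ :=
  sInf {v : ℝ | ∃ z, SFeas a b r μ ν z ∧ v = objS a b L z}

namespace MvPolynomial

variable {σ R : Type*} [CommRing R]

lemma isHomogeneous_prod_X (I : Finset σ) :
    (∏ q ∈ I, X q : MvPolynomial σ R).IsHomogeneous I.card := by
  simpa using IsHomogeneous.prod I _ (fun _ => 1) fun q _ => isHomogeneous_X R q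

lemma sum_range_homogeneousComponent_of_totalDegree_le {p : MvPolynomial σ R} {t : ℕ}
    (hp : p.totalDegree ≤ t) : ∑ k ∈ Finset.range (t + 1), homogeneousComponent k p = p := by
  conv_rhs => rw [← sum_homogeneousComponent p]
  refine (Finset.sum_subset (Finset.range_subset_range.mpr (by omega)) fun k _ hk => ?_).symm
  exact homogeneousComponent_eq_zero k p (by simpa using hk)

noncomputable def homogenizeBy (ℓ : MvPolynomial σ R) (t : ℕ) (p : MvPolynomial σ R) :
    MvPolynomial σ R :=
  ∑ k ∈ Finset.range (t + 1), ℓ ^ (t - k) * homogeneousComponent k p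

variable {ℓ : MvPolynomial σ R}

lemma IsHomogeneous.homogenizeBy (hℓ : ℓ.IsHomogeneous 1) (t : ℕ) (p : MvPolynomial σ R) :
    (homogenizeBy ℓ t p).IsHomogeneous t := by
  refine IsHomogeneous.sum _ _ _ fun k hk => ?_
  have h := (hℓ.pow (t - k)).mul (homogeneousComponent_isHomogeneous k p)
  rwa [one_mul, Nat.sub_add_cancel (Nat.lt_succ_iff.mp (Finset.mem_range.mp hk))] at h

lemma totalDegree_homogenizeBy_le (hℓ : ℓ.totalDegree ≤ 1) (t : ℕ) (p : MvPolynomial σ R) :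
    (homogenizeBy ℓ t p).totalDegree ≤ t := by
  refine (totalDegree_finsetSum _ _).trans (Finset.sup_le fun k hk => ?_)
  have hk : k ≤ t := Nat.lt_succ_iff.mp (Finset.mem_range.mp hk)
  calc (ℓ ^ (t - k) * homogeneousComponent k p).totalDegree
      ≤ (t - k) * ℓ.totalDegree + k :=
        (totalDegree_mul _ _).trans <| add_le_add (totalDegree_pow _ _)
          (homogeneousComponent_isHomogeneous k p).totalDegree_le
    _ ≤ t := by nlinarith [Nat.sub_add_cancel hk]

variable {L : MvPolynomial σ R →ₗ[R] R} {N : ℕ}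

lemma map_mul_eq_zero_of_map_mul_monomial {f : MvPolynomial σ R}
    (hf : ∀ α : σ →₀ ℕ, α.degree < N → L (f * monomial α 1) = 0)
    {g : MvPolynomial σ R} (hg : g.totalDegree < N) : L (f * g) = 0 := by
  rw [g.as_sum, Finset.mul_sum, map_sum]
  refine Finset.sum_eq_zero fun α hα => ?_
  rw [show monomial α (coeff α g) = coeff α g • monomial α 1 by
      rw [smul_monomial, smul_eq_mul, mul_one],
    mul_smul_comm, map_smul, hf α ((le_totalDegree hα).trans_lt hg), smul_zero]

lemma map_pow_mul_of_map_mul (hℓ : ℓ.totalDegree ≤ 1)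
    (hL : ∀ g : MvPolynomial σ R, g.totalDegree < N → L (ℓ * g) = L g)
    (a : ℕ) {g : MvPolynomial σ R} (hg : g.totalDegree + a ≤ N) : L (ℓ ^ a * g) = L g := by
  induction a with
  | zero => rw [pow_zero, one_mul]
  | succ a ih =>
    have hdeg : (ℓ ^ a * g).totalDegree < N := by
      have := totalDegree_mul (ℓ ^ a) g
      have := totalDegree_pow ℓ a
      nlinarith
    rw [pow_succ', mul_assoc, hL _ hdeg, ih (by omega)]

lemma map_mul_homogenizeBy (hℓ : ℓ.totalDegree ≤ 1)
    (hL : ∀ g : MvPolynomial σ R, g.totalDegree < N → L (ℓ * g) = L g)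
    {t : ℕ} {f p : MvPolynomial σ R} (hf : f.totalDegree + t ≤ N) (hp : p.totalDegree ≤ t) :
    L (f * homogenizeBy ℓ t p) = L (f * p) := by
  conv_rhs => rw [← sum_range_homogeneousComponent_of_totalDegree_le hp]
  rw [homogenizeBy, Finset.mul_sum, Finset.mul_sum, map_sum, map_sum]
  refine Finset.sum_congr rfl fun k hk => ?_
  have hk : k ≤ t := Nat.lt_succ_iff.mp (Finset.mem_range.mp hk)
  rw [mul_left_comm, map_pow_mul_of_map_mul hℓ hL _]
  have := totalDegree_mul f (homogeneousComponent k p)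
  have := (homogeneousComponent_isHomogeneous k p).totalDegree_le
  omega

lemma map_mul_homogenizeBy_sq (hℓ : ℓ.totalDegree ≤ 1)
    (hL : ∀ g : MvPolynomial σ R, g.totalDegree < N → L (ℓ * g) = L g)
    {t : ℕ} {f p : MvPolynomial σ R} (hf : f.totalDegree + 2 * t ≤ N) (hp : p.totalDegree ≤ t) :
    L (f * homogenizeBy ℓ t p ^ 2) = L (f * p ^ 2) := by
  set q := homogenizeBy ℓ t p
  have hq : q.totalDegree ≤ t := totalDegree_homogenizeBy_le hℓ t p
  have hfq := totalDegree_mul f q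
  have hfp := totalDegree_mul f p
  calc L (f * q ^ 2) = L (f * q * q) := by ring_nf
    _ = L (f * q * p) := map_mul_homogenizeBy hℓ hL (by omega) hp
    _ = L (f * p * q) := by ring_nf
    _ = L (f * p ^ 2) := by rw [map_mul_homogenizeBy hℓ hL (by omega) hp]; ring_nf

end MvPolynomial

section Riesz

variable {σ : Type*} (z : (σ →₀ ℕ) → ℝ)

noncomputable def rieszLinear : MvPolynomial σ ℝ →ₗ[ℝ] ℝ :=
  Finsupp.linearCombination ℝ z ∘ₗ (AddMonoidAlgebra.coeffLinearEquiv ℝ).toLinearMap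

lemma rieszLinear_apply (p : MvPolynomial σ ℝ) : rieszLinear z p = riesz z p := rfl

lemma mdeg_eq_degree (α : σ →₀ ℕ) : mdeg α = α.degree := rfl

variable {z}

lemma locZero.riesz_mul_monomial {g : MvPolynomial σ ℝ} {s : ℕ} (h : locZero z g s)
    {α : σ →₀ ℕ} (hα : α.degree ≤ 2 * s) : riesz z (g * monomial α 1) = 0 := by
  obtain ⟨β, hβα, hβ⟩ := Finsupp.exists_le_degree_eq α (min α.degree s) (min_le_left _ _)
  obtain ⟨γ, rfl⟩ := le_iff_exists_add.mp hβα
  rw [map_add] at hα hβ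
  have := h β γ (by rw [mdeg_eq_degree]; omega) (by rw [mdeg_eq_degree]; omega)
  rwa [mul_assoc, monomial_mul, one_mul] at this

lemma riesz_mul_monomial_of_locZero_mul_X {g : MvPolynomial σ ℝ} {r : ℕ}
    (hg : locZero z g (r - 1)) (hgX : ∀ q, locZero z (g * X q) (r - 1))
    {α : σ →₀ ℕ} (hα : α.degree < 2 * r) : riesz z (g * monomial α 1) = 0 := by
  rcases eq_or_ne α 0 with rfl | hα0
  · exact hg.riesz_mul_monomial (by simp)
  obtain ⟨q, hq⟩ := Finsupp.ne_iff.mp hα0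
  obtain ⟨β, rfl⟩ :=
    le_iff_exists_add.mp (Finsupp.single_le_iff.mpr (Nat.one_le_iff_ne_zero.mpr hq))
  rw [map_add, Finsupp.degree_single] at hα
  have := (hgX q).riesz_mul_monomial (α := β) (by omega)
  rwa [mul_assoc, X, monomial_mul, one_mul] at this

end Riesz

section Marginals

variable {m n r : ℕ} {μ : Fin m → ℝ} {z : ((Fin m × Fin n) →₀ ℕ) → ℝ}

lemma sum_rowPoly (hμ : ∑ i, μ i = 1) : ∑ i, rowPoly m n μ i = ∑ q, X q - 1 := by
  simp only [rowPoly]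
  rw [Finset.sum_sub_distrib, ← Fintype.sum_prod_type, ← map_sum C, hμ, map_one]

lemma rieszLinear_sum_X_mul (hμ : ∑ i, μ i = 1)
    (hrow : ∀ i, locZero z (rowPoly m n μ i) (r - 1))
    (hrow2 : ∀ i₁ i₂ : Fin m, ∀ j : Fin n, locZero z (rowPoly m n μ i₁ * X (i₂, j)) (r - 1))
    {g : MvPolynomial (Fin m × Fin n) ℝ} (hg : g.totalDegree < 2 * r) :
    rieszLinear z ((∑ q, X q) * g) = rieszLinear z g := by
  have hzero : rieszLinear z ((∑ i, rowPoly m n μ i) * g) = 0 := by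
    rw [Finset.sum_mul, map_sum]
    exact Finset.sum_eq_zero fun i _ => map_mul_eq_zero_of_map_mul_monomial
      (fun α hα => riesz_mul_monomial_of_locZero_mul_X (hrow i) (fun q => hrow2 i q.1 q.2) hα) hg
  rwa [sum_rowPoly hμ, sub_mul, one_mul, map_sub, sub_eq_zero] at hzero

end Marginals

theorem stmt17_general (m n r : ℕ)
    (μ : Fin m → ℝ) (hμ : IsProbVec μ)
    (z : ((Fin m × Fin n) →₀ ℕ) → ℝ)
    (hrow : ∀ i, locZero z (rowPoly m n μ i) (r - 1))
    (hrow2 : ∀ i₁ i₂ : Fin m, ∀ j : Fin n,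
      locZero z (rowPoly m n μ i₁ * X (i₂, j)) (r - 1))
    (I : Finset (Fin m × Fin n)) (hI : I.card ≤ 2 * r) :
    locPSD z (eI I) (r - (I.card + 1) / 2) ↔
      ∀ p : MvPolynomial (Fin m × Fin n) ℝ,
        p.IsHomogeneous (r - (I.card + 1) / 2) → 0 ≤ riesz z (eI I * p ^ 2) := by
  set t := r - (I.card + 1) / 2
  have hS : (∑ q, X q : MvPolynomial (Fin m × Fin n) ℝ).IsHomogeneous 1 :=
    IsHomogeneous.sum _ _ _ fun q _ => isHomogeneous_X ℝ q
  have hdeg : (eI I).totalDegree + 2 * t ≤ 2 * r := by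
    have := (isHomogeneous_prod_X (R := ℝ) I).totalDegree_le
    rw [eI]
    omega
  refine ⟨fun h p hp => h p hp.totalDegree_le, fun h p hp => ?_⟩
  rw [← rieszLinear_apply, ← map_mul_homogenizeBy_sq hS.totalDegree_le
    (fun g hg => rieszLinear_sum_X_mul hμ.2 hrow hrow2 hg) hdeg hp]
  exact h _ (hS.homogenizeBy t p)

/-- Under the marginal localizing equalities, the full truncated
localizing matrix `M_{r−d_I}(e_I z)` is PSD iff its principal submatrix indexed by
multi-indices of length exactly `r−d_I` (i.e. the quadratic form restricted to
homogeneous polynomials of degree `r−d_I`) is PSD. -/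
theorem stmt17 (m n r : ℕ) (hm : 0 < m) (hn : 0 < n) (hr : 0 < r)
    (μ : Fin m → ℝ) (ν : Fin n → ℝ) (hμ : IsProbVec μ) (hν : IsProbVec ν)
    (z : ((Fin m × Fin n) →₀ ℕ) → ℝ) (hz0 : z 0 = 1)
    (hrow : ∀ i, locZero z (rowPoly m n μ i) (r - 1))
    (hcol : ∀ j, locZero z (colPoly m n ν j) (r - 1))
    (hrow2 : ∀ i₁ i₂ : Fin m, ∀ j : Fin n,
      locZero z (rowPoly m n μ i₁ * X (i₂, j)) (r - 1))
    (hcol2 : ∀ j₁ j₂ : Fin n, ∀ i : Fin m,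
      locZero z (colPoly m n ν j₁ * X (i, j₂)) (r - 1))
    (I : Finset (Fin m × Fin n)) (hI : I.card ≤ 2 * r) :
    locPSD z (eI I) (r - (I.card + 1) / 2) ↔
      ∀ p : MvPolynomial (Fin m × Fin n) ℝ,
        p.IsHomogeneous (r - (I.card + 1) / 2) → 0 ≤ riesz z (eI I * p ^ 2) :=
  stmt17_general m n r μ hμ z hrow hrow2 I hI
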